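/- Let V be a module over ZMod 2, let τ : V ⊗ V → V ⊗ V be the flip determined by x ⊗ y ↦ y ⊗ x, and let N = id + τ. Then LinearMap.ker N = LinearMap.range N ⊔ Submodule.span (ZMod 2) {x ⊗ x : x ∈ V}, i.e. every symmetric tensor is a sum of a norm element (1 + τ)(z) and of pure squares x ⊗ x. (This is the exactness, in characteristic 2, of the four-term sequence 0 → Γ² → Γ¹⊗Γ¹ →^{1+τ} Γ¹⊗Γ¹ → S² → 0 of functors on F₂-vector spaces at the first middle spot, the symmetric tensors ker(1 + τ) being Γ²(V).) -/

import Mathlib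

/-!
Write a symmetric tensor over a basis `(b i)` of `V`, indexed by a linearly ordered set, as
`t = ∑ a i j • b i ⊗ b j` with `a i j = a j i`. With `u` its part strictly above the diagonal,
`t = u + τ u + ∑ a i i • b i ⊗ b i`. This works over any commutative ring for free `V`, and in
characteristic two the symmetric tensors are exactly the kernel of `1 + τ`.
-/

open TensorProduct

namespace Module.Basis

variable {R V ι : Type*} [CommRing R] [AddCommGroup V] [Module R V] (b : Basis ι R V)

noncomputable def tensorProjection (r : ι → ι → Prop) [DecidableRel r] :
    V ⊗[R] V →ₗ[R] V ⊗[R] V :=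
  (b.tensorProduct b).constr R fun p => if r p.1 p.2 then b p.1 ⊗ₜ b p.2 else 0

lemma tensorProjection_tmul (r : ι → ι → Prop) [DecidableRel r] (i j : ι) :
    b.tensorProjection r (b i ⊗ₜ b j) = if r i j then b i ⊗ₜ b j else 0 := by
  rw [tensorProjection, ← tensorProduct_apply, constr_basis]
  simp

lemma comm_comp_tensorProjection (r : ι → ι → Prop) [DecidableRel r] :
    (TensorProduct.comm R V V).toLinearMap ∘ₗ b.tensorProjection r =
      b.tensorProjection (fun i j => r j i) ∘ₗ (TensorProduct.comm R V V).toLinearMap :=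
  (b.tensorProduct b).ext fun ⟨i, j⟩ => by
    simp only [LinearMap.comp_apply, LinearEquiv.coe_coe, tensorProduct_apply,
      tensorProjection_tmul, comm_tmul]
    split_ifs <;> simp

lemma range_tensorProjection_eq_le_span_tmul_self [DecidableEq ι] :
    LinearMap.range (b.tensorProjection (· = ·)) ≤
      Submodule.span R {z : V ⊗[R] V | ∃ x : V, z = x ⊗ₜ[R] x} := by
  rw [tensorProjection, constr_range, Submodule.span_le]
  rintro _ ⟨⟨i, j⟩, rfl⟩
  dsimp only
  split_ifs with hij
  · exact Submodule.subset_span ⟨b i, hij ▸ rfl⟩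
  · exact zero_mem _

variable [LinearOrder ι]

lemma tensorProjection_lt_add_gt_add_eq :
    b.tensorProjection (· < ·) + b.tensorProjection (· > ·) + b.tensorProjection (· = ·) =
      LinearMap.id :=
  (b.tensorProduct b).ext fun ⟨i, j⟩ => by
    simp only [LinearMap.add_apply, tensorProduct_apply, tensorProjection_tmul,
      LinearMap.id_apply]
    rcases lt_trichotomy i j with h | h | h
    · simp [h, h.ne, h.not_gt]
    · simp [h]
    · simp [h, h.ne', h.not_gt]

lemma eq_add_comm_add_of_comm_eq {t : V ⊗[R] V} (ht : TensorProduct.comm R V V t = t) :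
    t = b.tensorProjection (· < ·) t + TensorProduct.comm R V V (b.tensorProjection (· < ·) t) +
      b.tensorProjection (· = ·) t := by
  have hgt : b.tensorProjection (· > ·) t =
      TensorProduct.comm R V V (b.tensorProjection (· < ·) t) := by
    rw [← LinearEquiv.coe_coe, ← LinearMap.comp_apply, comm_comp_tensorProjection,
      LinearMap.comp_apply, LinearEquiv.coe_coe, ht]
  rw [← hgt, ← LinearMap.add_apply, ← LinearMap.add_apply, tensorProjection_lt_add_gt_add_eq,
    LinearMap.id_apply]

end Module.Basis

namespace TensorProduct

variable {R V : Type*} [CommRing R] [AddCommGroup V] [Module R V] [Module.Free R V]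

theorem mem_range_id_add_comm_sup_span_of_comm_eq {t : V ⊗[R] V}
    (ht : TensorProduct.comm R V V t = t) :
    t ∈ LinearMap.range (LinearMap.id + (TensorProduct.comm R V V).toLinearMap) ⊔
      Submodule.span R {z : V ⊗[R] V | ∃ x : V, z = x ⊗ₜ[R] x} := by
  obtain ⟨ι, b⟩ := Module.Free.exists_basis R V
  let _ : LinearOrder ι := IsWellOrder.linearOrder WellOrderingRel
  rw [b.eq_add_comm_add_of_comm_eq ht]
  exact Submodule.add_mem_sup (LinearMap.mem_range_self _ _)
    (b.range_tensorProjection_eq_le_span_tmul_self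
      (LinearMap.mem_range_self (b.tensorProjection (· = ·)) t))

theorem ker_id_sub_comm_eq :
    LinearMap.ker (LinearMap.id - (TensorProduct.comm R V V).toLinearMap) =
      LinearMap.range (LinearMap.id + (TensorProduct.comm R V V).toLinearMap) ⊔
        Submodule.span R {z : V ⊗[R] V | ∃ x : V, z = x ⊗ₜ[R] x} := by
  refine le_antisymm (fun t ht => ?_) (sup_le ?_ (Submodule.span_le.mpr ?_))
  · exact mem_range_id_add_comm_sup_span_of_comm_eq (sub_eq_zero.mp ht).symm
  · rintro _ ⟨u, rfl⟩
    simp [add_comm]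
  · rintro _ ⟨x, rfl⟩
    simp

end TensorProduct

theorem symmetric_tensors_char_two (V : Type*) [AddCommGroup V] [Module (ZMod 2) V] :
    (LinearMap.ker
        (LinearMap.id + (TensorProduct.comm (ZMod 2) V V).toLinearMap) :
      Submodule (ZMod 2) (V ⊗[ZMod 2] V)) =
      LinearMap.range (LinearMap.id + (TensorProduct.comm (ZMod 2) V V).toLinearMap) ⊔
        Submodule.span (ZMod 2) {z : V ⊗[ZMod 2] V | ∃ x : V, z = x ⊗ₜ[ZMod 2] x} := by
  conv_lhs => rw [← ZModModule.sub_eq_add]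
  exact TensorProduct.ker_id_sub_comm_eq
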